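/- arXiv:1302.4498 — 4 statements merged into one kernel-verified Lean document; each statement's English description precedes it below -/
import Mathlib

section
/- Let p ≥ 5 be a prime and F = F_{p^r}. Let l1, l2, l3 : F → F be affine functions with l1 and l2 bijections, and let d : F → F be a Dembowski–Ostrom polynomial function. If A : F → F is an Alltop function, then A'(x) = l1(A(l2(x))) + d(x) + l3(x) is also an Alltop function on F. -/
open Finset

/-- The difference function `Δ_{f,a}(x) = f(x+a) - f(x)`. -/
def deltaFn {F : Type*} [Field F] (f : F → F) (a : F) : F → F := fun x => f (x + a) - f x

/-- `f` is planar if `Δ_{f,a}` is a bijection for every `a ≠ 0`. -/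
def IsPlanar {F : Type*} [Field F] (f : F → F) : Prop :=
  ∀ a : F, a ≠ 0 → Function.Bijective (deltaFn f a)

/-- `f` is an Alltop function if `Δ_{f,a}` is planar for every `a ≠ 0`. -/
def IsAlltop {F : Type*} [Field F] (f : F → F) : Prop :=
  ∀ a : F, a ≠ 0 → IsPlanar (deltaFn f a)

/-- `L` is additive if `L(x+y) = L(x) + L(y)`. -/
def IsAdditive {F : Type*} [Field F] (L : F → F) : Prop :=
  ∀ x y : F, L (x + y) = L x + L y

/-- `l` is affine if `l = L + c` for an additive `L` and a constant `c`. -/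
def IsAffine {F : Type*} [Field F] (l : F → F) : Prop :=
  ∃ L : F → F, ∃ c : F, IsAdditive L ∧ ∀ x, l x = L x + c

/-- Extended affine (EA) equivalence: `f(x) = l1(g(l2(x))) + l3(x)` with
`l1, l2, l3` affine and `l1, l2` bijections. -/
def EAEquiv {F : Type*} [Field F] (f g : F → F) : Prop :=
  ∃ l1 l2 l3 : F → F, IsAffine l1 ∧ IsAffine l2 ∧ IsAffine l3 ∧
    Function.Bijective l1 ∧ Function.Bijective l2 ∧ ∀ x, f x = l1 (g (l2 x)) + l3 x

/-- A Dembowski–Ostrom polynomial function on `F_{p^r}`: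
`f(x) = ∑_{i,j=0}^{r-1} a_{ij} x^{p^i + p^j}`. -/
def IsDembowskiOstrom (p r : ℕ) [Fact p.Prime] (f : GaloisField p r → GaloisField p r) : Prop :=
  ∃ a : ℕ → ℕ → GaloisField p r,
    ∀ x, f x = ∑ i ∈ Finset.range r, ∑ j ∈ Finset.range r, a i j * x ^ (p ^ i + p ^ j)

/-!
The second difference `Δ_b Δ_a` of `l1 ∘ A ∘ l2` is `L1 ∘ Δ_{L2 b} Δ_{L2 a} A ∘ l2`, where `L1, L2`
are the (bijective) additive parts of `l1, l2`, so it is again a bijection. Adding `d + l3` only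
shifts this second difference by a constant: the second difference of an affine map vanishes, and
since `(x + y)^(p^i) = x^(p^i) + y^(p^i)`, that of a Dembowski–Ostrom monomial `x^(p^i + p^j)` is
`a^(p^i) b^(p^j) + b^(p^i) a^(p^j)`, independent of `x`.
-/

open Function

section

variable {F : Type*} [Field F]

def HasConstSecondDiff (g : F → F) : Prop :=
  ∀ a b : F, ∃ C : F, ∀ x, deltaFn (deltaFn g a) b x = C

theorem Function.Bijective.of_eq_add_const {L l : F → F} {c : F} (hb : Bijective l)
    (hl : ∀ x, l x = L x + c) : Bijective L := by
  have : L = (· - c) ∘ l := by funext x; simp [hl]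
  rw [this]
  exact (Equiv.subRight c).bijective.comp hb

theorem IsAdditive.map_sub {L : F → F} (hL : IsAdditive L) (x y : F) : L (x - y) = L x - L y :=
  (AddMonoidHom.mk' L hL).map_sub x y

theorem deltaFn_affine_comp_comp {f l1 L1 l2 L2 : F → F} {c1 c2 : F}
    (hL1 : IsAdditive L1) (hl1 : ∀ x, l1 x = L1 x + c1)
    (hL2 : IsAdditive L2) (hl2 : ∀ x, l2 x = L2 x + c2) (a : F) :
    deltaFn (fun x => l1 (f (l2 x))) a = fun x => L1 (deltaFn f (L2 a) (l2 x)) := by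
  funext x
  simp only [deltaFn, hl1, hl2]
  rw [hL2, add_right_comm, hL1.map_sub]
  ring

theorem IsAlltop.affine_comp_comp {A l1 l2 : F → F} (hA : IsAlltop A)
    (hl1 : IsAffine l1) (hl2 : IsAffine l2) (hl1b : Bijective l1) (hl2b : Bijective l2) :
    IsAlltop (fun x => l1 (A (l2 x))) := by
  obtain ⟨L1, c1, hL1, hl1e⟩ := hl1
  obtain ⟨L2, c2, hL2, hl2e⟩ := hl2
  have hL2inj := (hl2b.of_eq_add_const hl2e).1
  have hL2ne : ∀ a, a ≠ 0 → L2 a ≠ 0 := fun a =>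
    (map_ne_zero_iff (AddMonoidHom.mk' L2 hL2) hL2inj).2
  intro a ha b hb
  rw [deltaFn_affine_comp_comp hL1 hl1e hL2 hl2e,
    deltaFn_affine_comp_comp hL1 (fun x => (add_zero (L1 x)).symm) hL2 hl2e]
  exact (hl1b.of_eq_add_const hl1e).comp
    ((hA _ (hL2ne a ha) _ (hL2ne b hb)).comp hl2b)

theorem IsAlltop.add {f g : F → F} (hf : IsAlltop f) (hg : HasConstSecondDiff g) :
    IsAlltop (fun x => f x + g x) := by
  intro a ha b hb
  obtain ⟨C, hC⟩ := hg a b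
  have : deltaFn (deltaFn (fun x => f x + g x) a) b = fun x => deltaFn (deltaFn f a) b x + C := by
    funext x
    rw [← hC x]
    simp only [deltaFn]
    ring
  rw [this]
  exact (Equiv.addRight C).bijective.comp (hf a ha b hb)

theorem IsAffine.hasConstSecondDiff {l : F → F} (hl : IsAffine l) : HasConstSecondDiff l := by
  obtain ⟨L, c, hL, hle⟩ := hl
  refine fun a b => ⟨0, fun x => ?_⟩
  simp only [deltaFn, hle]
  rw [hL (x + b), hL x b, hL x a]
  ring

theorem deltaFn_deltaFn_pow_expChar_pow_add_expChar_pow (p : ℕ) [ExpChar F p]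
    (i j : ℕ) (a b x : F) :
    deltaFn (deltaFn (· ^ (p ^ i + p ^ j)) a) b x = a ^ p ^ i * b ^ p ^ j + b ^ p ^ i * a ^ p ^ j := by
  simp only [deltaFn, pow_add, add_pow_expChar_pow]
  ring

end

theorem IsDembowskiOstrom.hasConstSecondDiff {p r : ℕ} [Fact p.Prime]
    {d : GaloisField p r → GaloisField p r} (hd : IsDembowskiOstrom p r d) :
    HasConstSecondDiff d := by
  obtain ⟨co, hco⟩ := hd
  refine fun a b => ⟨∑ i ∈ range r, ∑ j ∈ range r,
    co i j * (a ^ p ^ i * b ^ p ^ j + b ^ p ^ i * a ^ p ^ j), fun x => ?_⟩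
  have hmono := fun i j => deltaFn_deltaFn_pow_expChar_pow_add_expChar_pow p i j a b x
  simp only [deltaFn] at hmono ⊢
  simp only [hco, ← sum_sub_distrib, ← mul_sub, hmono]

theorem alltop_of_affine_comp_add_DO_general (p r : ℕ) [Fact p.Prime]
    (l1 l2 l3 d A : GaloisField p r → GaloisField p r)
    (hl1 : IsAffine l1) (hl2 : IsAffine l2) (hl3 : IsAffine l3)
    (hl1b : Function.Bijective l1) (hl2b : Function.Bijective l2)
    (hd : IsDembowskiOstrom p r d) (hA : IsAlltop A) :
    IsAlltop (fun x => l1 (A (l2 x)) + d x + l3 x) :=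
  ((hA.affine_comp_comp hl1 hl2 hl1b hl2b).add hd.hasConstSecondDiff).add hl3.hasConstSecondDiff

theorem alltop_of_affine_comp_add_DO (p r : ℕ) [Fact p.Prime] (hp : 5 ≤ p) (hr : 0 < r)
    (l1 l2 l3 d A : GaloisField p r → GaloisField p r)
    (hl1 : IsAffine l1) (hl2 : IsAffine l2) (hl3 : IsAffine l3)
    (hl1b : Function.Bijective l1) (hl2b : Function.Bijective l2)
    (hd : IsDembowskiOstrom p r d) (hA : IsAlltop A) :
    IsAlltop (fun x => l1 (A (l2 x)) + d x + l3 x) :=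
  alltop_of_affine_comp_add_DO_general p r l1 l2 l3 d A hl1 hl2 hl3 hl1b hl2b hd hA
end

section
/- Let p ≥ 5 be a prime and r a positive integer such that 3 does not divide p^r + 1. Then A(x) = x^{p^r + 2} is an Alltop function on the field F_{p^{2r}}. -/
open Finset

/-!
Write `q = p ^ r`, so that `x ↦ x ^ q` is an involutive field automorphism of `F_{q²}`. The second
difference `Δ_b Δ_a` of `x ^ (q + 2)` is `2 (a b x^q + (u + v) x) + c` with `u = a^q b`, `v = a b^q`
and `c` constant; it is additive up to `c`, so it is bijective once its kernel is trivial. A nonzero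
`z` in the kernel, together with its image under Frobenius, forces `u v = (u + v)²`, that is
`u² + u v + v² = 0`, whence `u³ = v³`. Since also `u^(q+1) = v^(q+1)` and `3 ∤ q + 1`, we get
`u = v`, and then `3 v² = 0`, impossible for `p ≠ 3`.
-/

open Function

theorem GaloisField.pow_prime_pow_self (p n : ℕ) [Fact p.Prime] (x : GaloisField p n) :
    x ^ p ^ n = x := by
  rcases eq_or_ne n 0 with rfl | hn
  · simp
  · have := Fintype.ofFinite (GaloisField p n)
    rw [← GaloisField.card p n hn, Nat.card_eq_fintype_card]
    exact FiniteField.pow_card x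

theorem eq_of_pow_eq_of_pow_eq_of_coprime {G : Type*} [CommGroupWithZero G] {u v : G} {m n : ℕ}
    (hmn : m.Coprime n) (hv : v ≠ 0) (hm : u ^ m = v ^ m) (hn : u ^ n = v ^ n) : u = v := by
  rw [← div_eq_one_iff_eq hv, ← pow_eq_one_iff_of_coprime hmn, div_pow, div_pow, hm, hn]
  exact ⟨div_self (pow_ne_zero _ hv), div_self (pow_ne_zero _ hv)⟩

theorem mul_pow_pow_succ_eq_of_pow_involutive {M : Type*} [CommMonoid M] {q : ℕ}
    (hinv : ∀ z : M, (z ^ q) ^ q = z) (a b : M) :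
    (a ^ q * b) ^ (q + 1) = (a * b ^ q) ^ (q + 1) := by
  rw [pow_succ, pow_succ, mul_pow, mul_pow, hinv, hinv, mul_comm]

section Frobenius

variable {F : Type*} [Field F] {p : ℕ} [ExpChar F p] {r : ℕ}

theorem deltaFn_deltaFn_pow_add_two (a b x : F) :
    deltaFn (deltaFn (fun x : F => x ^ (p ^ r + 2)) a) b x =
      2 * (a * b * x ^ p ^ r + (a ^ p ^ r * b + a * b ^ p ^ r) * x) +
        (a ^ p ^ r * b ^ 2 + 2 * a * b ^ p ^ r * b + a ^ 2 * b ^ p ^ r +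
          2 * a ^ p ^ r * a * b) := by
  simp only [deltaFn, pow_add _ (p ^ r) 2, add_pow_expChar_pow]
  ring

theorem bijective_mul_frobenius_add_mul_add [Finite F] {α β : F} (c : F)
    (hker : ∀ z : F, α * z ^ p ^ r + β * z = 0 → z = 0) :
    Bijective fun x : F => α * x ^ p ^ r + β * x + c := by
  refine Finite.injective_iff_bijective.mp fun x y hxy => sub_eq_zero.mp (hker _ ?_)
  rw [sub_pow_expChar_pow]
  linear_combination hxy

theorem mul_eq_sq_of_frobenius_kernel (hinv : ∀ z : F, (z ^ p ^ r) ^ p ^ r = z)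
    {a b z : F} (hz : z ≠ 0)
    (hker : a * b * z ^ p ^ r + (a ^ p ^ r * b + a * b ^ p ^ r) * z = 0) :
    a ^ p ^ r * b * (a * b ^ p ^ r) = (a ^ p ^ r * b + a * b ^ p ^ r) ^ 2 := by
  have hker' : a ^ p ^ r * b ^ p ^ r * z + (a ^ p ^ r * b + a * b ^ p ^ r) * z ^ p ^ r = 0 := by
    have := congrArg (· ^ p ^ r) hker
    simp only [add_pow_expChar_pow, mul_pow, hinv, zero_pow (expChar_pow_pos F p r).ne'] at this
    linear_combination this
  have hzero : (a ^ p ^ r * b * (a * b ^ p ^ r) - (a ^ p ^ r * b + a * b ^ p ^ r) ^ 2) * z = 0 := by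
    linear_combination a * b * hker' - (a ^ p ^ r * b + a * b ^ p ^ r) * hker
  exact sub_eq_zero.mp ((mul_eq_zero.mp hzero).resolve_right hz)

theorem frobenius_kernel_eq_zero (hinv : ∀ z : F, (z ^ p ^ r) ^ p ^ r = z)
    (h3 : ¬ 3 ∣ p ^ r + 1) (hF : (3 : F) ≠ 0) {a b : F} (ha : a ≠ 0) (hb : b ≠ 0) (z : F)
    (hker : a * b * z ^ p ^ r + (a ^ p ^ r * b + a * b ^ p ^ r) * z = 0) : z = 0 := by
  by_contra hz
  set u := a ^ p ^ r * b
  set v := a * b ^ p ^ r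
  have hv : v ≠ 0 := mul_ne_zero ha (pow_ne_zero _ hb)
  have hcube : u ^ 3 = v ^ 3 := by
    linear_combination (v - u) * mul_eq_sq_of_frobenius_kernel hinv hz hker
  have huv : u = v := eq_of_pow_eq_of_pow_eq_of_coprime
    ((Nat.Prime.coprime_iff_not_dvd Nat.prime_three).mpr h3) hv hcube
    (mul_pow_pow_succ_eq_of_pow_involutive hinv a b)
  have h3v : 3 * v ^ 2 = 0 := by
    linear_combination -(mul_eq_sq_of_frobenius_kernel hinv hz hker) - (u + 2 * v) * huv
  exact hF ((mul_eq_zero.mp h3v).resolve_right (pow_ne_zero 2 hv))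

end Frobenius

theorem pow_pr_add_two_alltop_general (p r : ℕ) [Fact p.Prime] (hp : 5 ≤ p)
    (h3 : ¬ (3 ∣ p ^ r + 1)) :
    IsAlltop (fun x : GaloisField p (2 * r) => x ^ (p ^ r + 2)) := by
  intro a ha b hb
  have hinv (z : GaloisField p (2 * r)) : (z ^ p ^ r) ^ p ^ r = z := by
    rw [← pow_mul, ← pow_add, ← two_mul, GaloisField.pow_prime_pow_self]
  have h2F : (2 : GaloisField p (2 * r)) ≠ 0 := by
    exact_mod_cast CharP.cast_ne_zero_of_ne_of_prime _ Nat.prime_two (by omega : p ≠ 2)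
  have h3F : (3 : GaloisField p (2 * r)) ≠ 0 := by
    exact_mod_cast CharP.cast_ne_zero_of_ne_of_prime _ Nat.prime_three (by omega : p ≠ 3)
  rw [show deltaFn (deltaFn _ a) b = _ from funext (deltaFn_deltaFn_pow_add_two a b)]
  simp only [mul_add, ← mul_assoc]
  refine bijective_mul_frobenius_add_mul_add _ fun z hz => ?_
  refine frobenius_kernel_eq_zero hinv h3 h3F ha hb z ((mul_eq_zero.mp ?_).resolve_left h2F)
  linear_combination hz

theorem pow_pr_add_two_alltop (p r : ℕ) [Fact p.Prime] (hp : 5 ≤ p) (hr : 0 < r)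
    (h3 : ¬ (3 ∣ p ^ r + 1)) :
    IsAlltop (fun x : GaloisField p (2 * r) => x ^ (p ^ r + 2)) :=
  pow_pr_add_two_alltop_general p r hp h3
end

section
/- Let p ≥ 5 be a prime, r a positive integer such that 3 does not divide p^r + 1, and F = F_{p^{2r}}. Then for every a ∈ F with a ≠ 0, the planar function Π_a(x) = 2a·x^{p^r+1} + a^{p^r}·x^2 is EA-equivalent to the function x ↦ x^2 on F. -/
open Finset

/-! The Frobenius `σ : x ↦ x ^ p ^ r` is an involution of `F = 𝔽_{q²}`, `q = p ^ r`, and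
`q ≡ 1 mod 6`, so `F` contains a primitive sixth root of unity `ω` fixed by `σ`. For the
`σ`-linearized binomials `L₂ x = σa ω x + a σx` and `L₁ y = y + ω σy` one finds, using
`ω² = ω - 1` (hence `ω³ = -1`), that `L₁ ((L₂ x)²) = (2ω - 1) σa Π_a(x)`. A binomial
`α x + β σx` is bijective as soon as `α σα ≠ β σβ`, which for `L₁` and `L₂` amounts to
`ω² ≠ 1`. -/

lemma IsPrimitiveRoot.sq_eq_sub_one_of_six {R : Type*} [CommRing R] [IsDomain R] {ω : R}
    (hω : IsPrimitiveRoot ω 6) : ω ^ 2 = ω - 1 := by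
  have hcube : IsPrimitiveRoot (ω ^ 3) 2 := hω.pow_of_dvd (by norm_num) (by norm_num)
  replace hcube : ω ^ 3 = -1 := hcube.eq_neg_one_of_two_right
  have hne : ω + 1 ≠ 0 := fun h => by
    apply hω.pow_ne_one_of_pos_of_lt (l := 2) (by norm_num) (by norm_num)
    rw [eq_neg_of_add_eq_zero_left h]
    ring
  have hprod : (ω + 1) * (ω ^ 2 - ω + 1) = 0 := by linear_combination hcube
  linear_combination (mul_eq_zero.mp hprod).resolve_left hne

lemma FiniteField.exists_isPrimitiveRoot {K : Type*} [Field K] [Finite K] {n : ℕ}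
    (hn : n ∣ Nat.card K - 1) : ∃ ζ : K, IsPrimitiveRoot ζ n := by
  obtain ⟨g, hg⟩ := IsCyclic.exists_ofOrder_eq_natCard (α := Kˣ)
  rw [← Nat.card_units, ← hg] at hn
  refine ⟨(g ^ (orderOf g / n) : Kˣ), IsPrimitiveRoot.coe_units_iff.mpr ?_⟩
  exact IsPrimitiveRoot.iff_orderOf.mpr (orderOf_pow_orderOf_div (orderOf_pos g).ne' hn)

lemma Nat.six_dvd_pow_sub_one {p r : ℕ} (hp : p.Prime) (hp5 : 5 ≤ p) (h3 : ¬ 3 ∣ p ^ r + 1) :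
    6 ∣ p ^ r - 1 := by
  have hndvd : ∀ ℓ : ℕ, ℓ.Prime → ℓ < 5 → ¬ ℓ ∣ p ^ r := fun ℓ hℓ hℓ5 h => by
    have := (Nat.prime_dvd_prime_iff_eq hℓ hp).mp (hℓ.dvd_of_dvd_pow h)
    omega
  have h2 := hndvd 2 Nat.prime_two (by norm_num)
  have h3' := hndvd 3 Nat.prime_three (by norm_num)
  have := Nat.mod_lt (p ^ r) (show 6 > 0 by norm_num)
  interval_cases hq : p ^ r % 6 <;> omega

section LinearizedBinomial

variable {F : Type*} [Field F] (σ : F →+* F)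

def linearizedBinomial (α β : F) (x : F) : F := α * x + β * σ x

lemma isAffine_linearizedBinomial (α β : F) : IsAffine (linearizedBinomial σ α β) :=
  ⟨linearizedBinomial σ α β, 0, fun x y => by simp only [linearizedBinomial, map_add]; ring,
    fun _ => (add_zero _).symm⟩

variable {σ}

lemma bijective_linearizedBinomial (hσ : Function.Involutive σ) {α β : F}
    (hN : α * σ α - β * σ β ≠ 0) : Function.Bijective (linearizedBinomial σ α β) := by
  set N := α * σ α - β * σ β
  have hσN : σ N = N := by simp only [N, map_sub, map_mul, hσ _]; ring
  -- solve the system `y = α x + β σx`, `σy = σα σx + σβ x` for `x`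
  refine Function.bijective_iff_has_inverse.mpr
    ⟨fun y => N⁻¹ * (σ α * y - β * σ y), fun x => ?_, fun y => ?_⟩
  · simp only [linearizedBinomial, map_add, map_mul, hσ _]
    field_simp
    ring
  · simp only [linearizedBinomial, map_mul, map_sub, map_inv₀, hσN, hσ _]
    field_simp
    ring

end LinearizedBinomial

theorem eaEquiv_sq_of_isPrimitiveRoot {F : Type*} [Field F] {σ : F →+* F}
    (hσ : Function.Involutive σ) {ω : F} (hω : IsPrimitiveRoot ω 6) (hσω : σ ω = ω)
    {a : F} (ha : a ≠ 0) :
    EAEquiv (fun x => 2 * a * (σ x * x) + σ a * x ^ 2) (fun x => x ^ 2) := by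
  have hω2 := hω.sq_eq_sub_one_of_six
  have hω0 : ω ≠ 0 := hω.ne_zero (by norm_num)
  have hω21 : ω ^ 2 - 1 ≠ 0 :=
    sub_ne_zero.mpr (hω.pow_ne_one_of_pos_of_lt (by norm_num) (by norm_num))
  have hσa : σ a ≠ 0 := (map_ne_zero σ).mpr ha
  have hω1 : ω + 1 ≠ 0 := fun h => hω21 (by linear_combination (ω - 1) * h)
  have hs : (2 * ω - 1) * σ a ≠ 0 := by
    rw [show 2 * ω - 1 = ω * (ω + 1) by linear_combination -hω2]
    exact mul_ne_zero (mul_ne_zero hω0 hω1) hσa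
  set c := ((2 * ω - 1) * σ a)⁻¹
  have hc : c ≠ 0 := inv_ne_zero hs
  have hσc : σ c ≠ 0 := (map_ne_zero σ).mpr hc
  refine ⟨linearizedBinomial σ c (c * ω), linearizedBinomial σ (σ a * ω) a, fun _ => 0,
    isAffine_linearizedBinomial σ _ _, isAffine_linearizedBinomial σ _ _,
    ⟨fun _ => 0, 0, fun _ _ => (add_zero 0).symm, fun _ => (add_zero 0).symm⟩,
    bijective_linearizedBinomial hσ ?_, bijective_linearizedBinomial hσ ?_, fun x => ?_⟩
  · rw [map_mul, hσω]
    convert mul_ne_zero (mul_ne_zero hc hσc) (neg_ne_zero.mpr hω21) using 1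
    ring
  · rw [map_mul, hσω, hσ a]
    convert mul_ne_zero (mul_ne_zero ha hσa) hω21 using 1
    ring
  · have key : (σ a * ω * x + a * σ x) ^ 2 + ω * (σ (σ a * ω * x + a * σ x)) ^ 2
        = (2 * ω - 1) * σ a * (2 * a * (σ x * x) + σ a * x ^ 2) := by
      simp only [map_add, map_mul, hσ _, hσω]
      linear_combination (σ a ^ 2 * x ^ 2 + 2 * a * σ a * x * σ x
        + a ^ 2 * σ x ^ 2 * (ω + 1)) * hω2
    simp only [linearizedBinomial, map_pow]
    rw [mul_assoc c ω, ← mul_add, key, inv_mul_cancel_left₀ hs, add_zero]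

lemma GaloisField.natCard_two_mul (p r : ℕ) [Fact p.Prime] (hr : r ≠ 0) :
    Nat.card (GaloisField p (2 * r)) = (p ^ r) ^ 2 := by
  rw [GaloisField.card p _ (by omega), ← pow_mul, mul_comm]

lemma GaloisField.iterateFrobenius_involutive (p r : ℕ) [Fact p.Prime] (hr : r ≠ 0) :
    Function.Involutive (iterateFrobenius (GaloisField p (2 * r)) p r) := fun x => by
  have := Fintype.ofFinite (GaloisField p (2 * r))
  rw [iterateFrobenius_def, iterateFrobenius_def, ← pow_mul, ← sq,
    ← GaloisField.natCard_two_mul p r hr, Nat.card_eq_fintype_card, FiniteField.pow_card]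

theorem pi_a_EAequiv_sq (p r : ℕ) [Fact p.Prime] (hp : 5 ≤ p) (hr : 0 < r)
    (h3 : ¬ (3 ∣ p ^ r + 1)) :
    ∀ a : GaloisField p (2 * r), a ≠ 0 →
      EAEquiv (fun x : GaloisField p (2 * r) => 2 * a * x ^ (p ^ r + 1) + a ^ (p ^ r) * x ^ 2)
        (fun x : GaloisField p (2 * r) => x ^ 2) := by
  intro a ha
  have h6 : 6 ∣ p ^ r - 1 := Nat.six_dvd_pow_sub_one Fact.out hp h3
  obtain ⟨ω, hω⟩ : ∃ ω : GaloisField p (2 * r), IsPrimitiveRoot ω 6 := by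
    apply FiniteField.exists_isPrimitiveRoot
    rw [GaloisField.natCard_two_mul p r hr.ne']
    exact h6.trans (Nat.sub_one_dvd_pow_sub_one _ 2)
  have hσω : iterateFrobenius _ p r ω = ω := by
    obtain ⟨m, hm⟩ := h6
    have hq : p ^ r = 6 * m + 1 := by have := Nat.one_le_pow r p (by omega); omega
    rw [iterateFrobenius_def, hq, pow_succ, pow_mul, hω.pow_eq_one, one_pow, one_mul]
  have hf : (fun x : GaloisField p (2 * r) => 2 * a * x ^ (p ^ r + 1) + a ^ (p ^ r) * x ^ 2) =
      fun x => 2 * a * (iterateFrobenius _ p r x * x) + iterateFrobenius _ p r a * x ^ 2 := by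
    funext x
    rw [iterateFrobenius_def, iterateFrobenius_def, pow_succ]
  rw [hf]
  exact eaEquiv_sq_of_isPrimitiveRoot
    (GaloisField.iterateFrobenius_involutive p r hr.ne') hω hσω ha
end

section
/- Let q = p^m with p ≥ 5 prime and let A : F_q → F_q be an Alltop function. For a, b ∈ F_q define v_{ab} ∈ ℂ^{F_q} by v_{ab}(x) = (1/√q)·χ(A(x+a) + b(x+a)), where χ(x) = e^{2πi·tr(x)/p} and tr : F_q → F_p is the absolute trace. Then for all a, b, c, d ∈ F_q with a ≠ c, the inner product satisfies |⟨v_{ab}, v_{cd}⟩| = 1/√q. -/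
open Finset

/-- The additive character `χ(x) = e^{2πi·tr(x)/p}` of `F_{p^m}`, where `tr` is the
absolute trace to `F_p = ZMod p`. -/
noncomputable def chi (p m : ℕ) [Fact p.Prime] (x : GaloisField p m) : ℂ :=
  Complex.exp (2 * Real.pi * Complex.I *
    ((Algebra.trace (ZMod p) (GaloisField p m) x).val : ℂ) / (p : ℂ))

/-- The standard Hermitian inner product `⟨u, w⟩ = ∑ x, conj (u x) * w x` on `ℂ^F`. -/
noncomputable def herm {F : Type*} [Fintype F] (u w : F → ℂ) : ℂ :=
  ∑ x : F, (starRingEnd ℂ) (u x) * w x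

/-- The Alltop-type vector `v_{ab}(x) = q^{-1/2} χ(A(x+a) + b(x+a))` in `ℂ^{F_q}`,
`q = p^m`. -/
noncomputable def alltopVec (p m : ℕ) [Fact p.Prime]
    (A : GaloisField p m → GaloisField p m) (a b : GaloisField p m) :
    GaloisField p m → ℂ :=
  fun x => ((1 / Real.sqrt ((p : ℝ) ^ m) : ℝ) : ℂ) * chi p m (A (x + a) + b * (x + a))

open scoped Classical in
/-- The standard basis vector `e_y` of `ℂ^{F_q}`. -/
noncomputable def stdVec (p m : ℕ) [Fact p.Prime] (y : GaloisField p m) : GaloisField p m → ℂ :=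
  fun x => if x = y then 1 else 0

/-
Up to the factor `1/q`, `⟨v_{ab}, v_{cd}⟩` is the character sum `∑ₓ χ(D x)` of
`D x = A(x+c) + d(x+c) - A(x+a) - b(x+a)`. For `u ≠ 0`, `D(x+u) - D(x)` is a translate (in `x` and
in value) of `Δ_u Δ_{c-a} A`, which is bijective because `A` is Alltop; so `D` is planar. Expanding
`|∑ₓ χ(D x)|²` as a double sum grouped by `u = x - y`, planarity kills every term with `u ≠ 0`,
leaving `|∑ₓ χ(D x)|² = q`.
-/

namespace AddChar

variable {G H K : Type*} [Fintype G] [AddCommGroup H] [Finite H] [RCLike K]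

lemma sum_comp_eq_zero_of_bijective {ψ : AddChar H K} (hψ : ψ ≠ 1) {g : G → H}
    (hg : Function.Bijective g) : ∑ x, ψ (g x) = 0 := by
  have := Fintype.ofFinite H
  rw [Fintype.sum_bijective g hg _ ψ fun _ => rfl, sum_eq_zero_of_ne_one hψ]

variable [AddCommGroup G]

lemma sum_comp_mul_conj (ψ : AddChar H K) (f : G → H) :
    (∑ x, ψ (f x)) * starRingEnd K (∑ x, ψ (f x)) = ∑ u, ∑ y, ψ (f (y + u) - f y) := by
  simp_rw [map_sum, ← map_neg_eq_conj, sum_mul_sum, ← map_add_eq_mul, ← sub_eq_add_neg]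
  rw [sum_comm]
  refine (sum_congr rfl fun y _ => ?_).trans sum_comm
  exact (Fintype.sum_equiv (Equiv.addLeft y) _ _ fun _ => rfl).symm

lemma norm_sum_comp_sq_eq_card {ψ : AddChar H K} (hψ : ψ ≠ 1) {f : G → H}
    (hf : ∀ u ≠ 0, Function.Bijective fun x => f (x + u) - f x) :
    ‖∑ x, ψ (f x)‖ ^ 2 = Fintype.card G := by
  have hsum : ∑ u, ∑ y, ψ (f (y + u) - f y) = Fintype.card G := by
    rw [Fintype.sum_eq_single 0 fun u hu => sum_comp_eq_zero_of_bijective hψ (hf u hu)]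
    simp
  exact_mod_cast (RCLike.mul_conj _).symm.trans ((sum_comp_mul_conj ψ f).trans hsum)

end AddChar

lemma IsAlltop.isPlanar_shift_sub_shift {F : Type*} [Field F] {A : F → F} (hA : IsAlltop A)
    {a c : F} (hac : a ≠ c) (b d : F) :
    IsPlanar fun x => (A (x + c) + d * (x + c)) - (A (x + a) + b * (x + a)) := by
  intro u hu
  have hΔ := hA (c - a) (sub_ne_zero.2 hac.symm) u hu
  convert ((Equiv.addRight ((d - b) * u)).bijective.comp hΔ).comp (Equiv.addRight a).bijective
    using 1
  funext x
  simp only [deltaFn, Function.comp_apply, Equiv.coe_addRight]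
  ring_nf

lemma herm_ofReal_mul_addChar {F H : Type*} [Fintype F] [AddCommGroup H] [Finite H]
    (ψ : AddChar H ℂ) (s : ℝ) (f g : F → H) :
    herm (fun x => (s : ℂ) * ψ (f x)) (fun x => (s : ℂ) * ψ (g x)) =
      (s : ℂ) ^ 2 * ∑ x, ψ (g x - f x) := by
  simp only [herm, mul_sum, map_mul, Complex.conj_ofReal, ← AddChar.map_neg_eq_conj,
    sub_eq_add_neg, AddChar.map_add_eq_mul]
  exact sum_congr rfl fun _ _ => by ring

section GaloisField

variable (p m : ℕ) [Fact p.Prime]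

noncomputable def chiAddChar : AddChar (GaloisField p m) ℂ :=
  ZMod.stdAddChar.compAddMonoidHom (Algebra.trace (ZMod p) (GaloisField p m)).toAddMonoidHom

lemma chiAddChar_apply (x : GaloisField p m) : chiAddChar p m x = chi p m x := by
  simp [chiAddChar, chi, ZMod.stdAddChar_apply, ZMod.toCircle_apply]

lemma chiAddChar_ne_one : chiAddChar p m ≠ 1 := by
  obtain ⟨x, hx⟩ := Algebra.trace_surjective (ZMod p) (GaloisField p m) 1
  refine AddChar.ne_one_iff.2 ⟨x, ?_⟩
  rw [chiAddChar, AddChar.compAddMonoidHom_apply, LinearMap.toAddMonoidHom_coe, hx,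
    ← (ZMod.stdAddChar (N := p)).map_zero_eq_one, ZMod.injective_stdAddChar.ne_iff]
  exact one_ne_zero

lemma alltopVec_eq (A : GaloisField p m → GaloisField p m) (a b : GaloisField p m) :
    alltopVec p m A a b =
      fun x => ((1 / √((p : ℝ) ^ m) : ℝ) : ℂ) * chiAddChar p m (A (x + a) + b * (x + a)) := by
  funext x
  simp only [alltopVec, chiAddChar_apply]

end GaloisField

theorem alltop_vectors_unbiased_general (p m : ℕ) [Fact p.Prime] [Fintype (GaloisField p m)]
    (hm : 0 < m) (A : GaloisField p m → GaloisField p m) (hA : IsAlltop A) :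
    ∀ a b c d : GaloisField p m, a ≠ c →
      ‖herm (alltopVec p m A a b) (alltopVec p m A c d)‖ =
        1 / Real.sqrt ((p : ℝ) ^ m) := by
  intro a b c d hac
  have hcard : (Fintype.card (GaloisField p m) : ℝ) = (p : ℝ) ^ m := by
    rw [← Nat.card_eq_fintype_card, GaloisField.card p m hm.ne', Nat.cast_pow]
  have hS : ‖∑ x, chiAddChar p m (A (x + c) + d * (x + c) - (A (x + a) + b * (x + a)))‖ =
      √((p : ℝ) ^ m) := by
    rw [← hcard, ← AddChar.norm_sum_comp_sq_eq_card (chiAddChar_ne_one p m)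
      (hA.isPlanar_shift_sub_shift hac b d), Real.sqrt_sq (norm_nonneg _)]
  rw [alltopVec_eq, alltopVec_eq, herm_ofReal_mul_addChar, norm_mul, norm_pow, Complex.norm_real,
    hS, Real.norm_of_nonneg (by positivity)]
  field_simp

theorem alltop_vectors_unbiased (p m : ℕ) [Fact p.Prime] [Fintype (GaloisField p m)]
    (hp : 5 ≤ p) (hm : 0 < m) (A : GaloisField p m → GaloisField p m) (hA : IsAlltop A) :
    ∀ a b c d : GaloisField p m, a ≠ c →
      ‖herm (alltopVec p m A a b) (alltopVec p m A c d)‖ =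
        1 / Real.sqrt ((p : ℝ) ^ m) :=
  alltop_vectors_unbiased_general p m hm A hA
end
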